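/- arXiv:2009.13054 — 2 statements merged into one kernel-verified Lean document; each statement's English description precedes it below -/
import Mathlib

section
/- Let h be a finite-dimensional nilpotent Lie algebra over ℂ and D a nonzero semisimple (diagonalizable) derivation of h. Then the semidirect product g = ℂX ⋉_D h, with bracket [X, z] = D(z) for z ∈ h and the given bracket on h, is solvable but not nilpotent. -/
/-- Derived series of subspaces of a bilinear multiplication. -/
def derivedSeriesOfBil {V : Type*} [AddCommGroup V] [Module ℂ V]
    (b : V →ₗ[ℂ] V →ₗ[ℂ] V) : ℕ → Submodule ℂ V
  | 0 => ⊤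
  | (k + 1) => Submodule.span ℂ
      {w | ∃ x ∈ derivedSeriesOfBil b k, ∃ y ∈ derivedSeriesOfBil b k, w = b x y}

/-- Lower central series of subspaces of a bilinear multiplication. -/
def lowerCentralOfBil {V : Type*} [AddCommGroup V] [Module ℂ V]
    (b : V →ₗ[ℂ] V →ₗ[ℂ] V) : ℕ → Submodule ℂ V
  | 0 => ⊤
  | (k + 1) => Submodule.span ℂ
      {w | ∃ x : V, ∃ y ∈ lowerCentralOfBil b k, w = b x y}

/-!
The bracket of `ℂX ⋉_D h` takes values in `h`, and on `h` it is the bracket of `h`; so the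
`(k+1)`-st derived term of the semidirect product lies in the `k`-th derived term of `h`, which
vanishes for large `k` because nilpotent Lie algebras are solvable. On the other hand `ad X`
restricts to `D` on `h`, and since `D` is diagonalizable and nonzero it has an eigenvector `v`
with eigenvalue `c ≠ 0`; then `v = c⁻¹ [X, v]` survives in every term of the lower central series.
-/
section Bilinear

variable {V : Type*} [AddCommGroup V] [Module ℂ V] (b : V →ₗ[ℂ] V →ₗ[ℂ] V)

lemma derivedSeriesOfBil_succ_le_map {L : Type*} [LieRing L] [LieAlgebra ℂ L]
    (f : L →ₗ[ℂ] V) (hrange : ∀ x y, b x y ∈ LinearMap.range f)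
    (hf : ∀ y z, b (f y) (f z) = f ⁅y, z⁆) (k : ℕ) :
    derivedSeriesOfBil b (k + 1) ≤ (LieAlgebra.derivedSeries ℂ L k).toSubmodule.map f := by
  induction k with
  | zero =>
    rw [derivedSeriesOfBil, Submodule.span_le]
    rintro _ ⟨x, -, y, -, rfl⟩
    obtain ⟨z, hz⟩ := hrange x y
    exact ⟨z, by simp, hz⟩
  | succ k ih =>
    rw [derivedSeriesOfBil, Submodule.span_le]
    rintro _ ⟨x, hx, y, hy, rfl⟩
    obtain ⟨v, hv, rfl⟩ := ih hx
    obtain ⟨u, hu, rfl⟩ := ih hy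
    refine ⟨⁅v, u⁆, ?_, (hf v u).symm⟩
    rw [LieAlgebra.derivedSeries_def, LieAlgebra.derivedSeriesOfIdeal_succ]
    exact LieSubmodule.lie_mem_lie hv hu

lemma exists_derivedSeriesOfBil_eq_bot {L : Type*} [LieRing L] [LieAlgebra ℂ L]
    [LieAlgebra.IsSolvable L] (f : L →ₗ[ℂ] V) (hrange : ∀ x y, b x y ∈ LinearMap.range f)
    (hf : ∀ y z, b (f y) (f z) = f ⁅y, z⁆) :
    ∃ k, derivedSeriesOfBil b k = ⊥ := by
  obtain ⟨k, hk⟩ := LieAlgebra.IsSolvable.solvable ℂ L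
  refine ⟨k + 1, le_bot_iff.mp ?_⟩
  simpa [hk] using derivedSeriesOfBil_succ_le_map b f hrange hf k

lemma mem_lowerCentralOfBil_of_apply_eq_smul {x v : V} {c : ℂ} (hc : c ≠ 0)
    (hv : b x v = c • v) (k : ℕ) : v ∈ lowerCentralOfBil b k := by
  induction k with
  | zero => trivial
  | succ k ih =>
    have hcv : c • v ∈ lowerCentralOfBil b (k + 1) :=
      Submodule.subset_span ⟨x, v, ih, hv.symm⟩
    simpa [smul_smul, inv_mul_cancel₀ hc] using (lowerCentralOfBil b (k + 1)).smul_mem c⁻¹ hcv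

lemma lowerCentralOfBil_ne_bot_of_apply_eq_smul {x v : V} {c : ℂ} (hc : c ≠ 0) (hv₀ : v ≠ 0)
    (hv : b x v = c • v) (k : ℕ) : lowerCentralOfBil b k ≠ ⊥ := fun hk =>
  hv₀ <| (Submodule.mem_bot ℂ).mp <| hk ▸ mem_lowerCentralOfBil_of_apply_eq_smul b hc hv k

end Bilinear

lemma Module.Basis.exists_apply_eq_smul_ne_zero {K M ι : Type*} [Field K] [AddCommGroup M]
    [Module K M] {D : M →ₗ[K] M} (hD : D ≠ 0) (e : Module.Basis ι K M) (c : ι → K)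
    (hc : ∀ i, D (e i) = c i • e i) :
    ∃ v ≠ 0, ∃ a : K, a ≠ 0 ∧ D v = a • v := by
  by_contra! hcon
  exact hD <| e.ext fun i => by
    have hci : c i = 0 := not_not.mp fun hci => hcon _ (e.ne_zero i) _ hci (hc i)
    rw [hc i, hci, zero_smul, LinearMap.zero_apply]

theorem semidirect_solvable_not_nilpotent_general {h : Type*} [LieRing h] [LieAlgebra ℂ h]
    [LieRing.IsNilpotent h]
    (D : h →ₗ[ℂ] h) (hD : D ≠ 0)
    (hDss : ∃ (ι : Type) (e : Module.Basis ι ℂ h) (c : ι → ℂ), ∀ i, D (e i) = c i • e i)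
    (b : (ℂ × h) →ₗ[ℂ] (ℂ × h) →ₗ[ℂ] (ℂ × h))
    (hb : ∀ (a : ℂ) (y : h) (a' : ℂ) (z : h),
      b (a, y) (a', z) = ((0 : ℂ), a • D z - a' • D y + ⁅y, z⁆)) :
    (∃ k : ℕ, derivedSeriesOfBil b k = ⊥) ∧ (∀ k : ℕ, lowerCentralOfBil b k ≠ ⊥) := by
  constructor
  · refine exists_derivedSeriesOfBil_eq_bot b (LinearMap.inr ℂ ℂ h) (fun x y => ?_) (fun y z => ?_)
    · exact ⟨_, (hb x.1 x.2 y.1 y.2).symm⟩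
    · simpa using hb 0 y 0 z
  · obtain ⟨ι, e, c, hc⟩ := hDss
    obtain ⟨v, hv₀, a, ha, hv⟩ := e.exists_apply_eq_smul_ne_zero hD c hc
    refine lowerCentralOfBil_ne_bot_of_apply_eq_smul b ha (x := (1, 0)) (v := (0, v)) ?_ ?_
    · simpa using hv₀
    · simpa [hv] using hb 1 0 0 v

/-- if `h` is a finite-dimensional nilpotent complex Lie algebra and `D` a nonzero
semisimple (diagonalizable) derivation of `h`, then the semidirect product `ℂX ⋉_D h`, with
bracket `[(a,y),(b,z)] = (0, a•D z - b•D y + [y,z])`, is solvable but not nilpotent. -/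
theorem semidirect_solvable_not_nilpotent {h : Type*} [LieRing h] [LieAlgebra ℂ h]
    [FiniteDimensional ℂ h] [LieRing.IsNilpotent h]
    (D : h →ₗ[ℂ] h) (hD : D ≠ 0)
    (hDder : ∀ y z : h, D ⁅y, z⁆ = ⁅D y, z⁆ + ⁅y, D z⁆)
    (hDss : ∃ (ι : Type) (e : Module.Basis ι ℂ h) (c : ι → ℂ), ∀ i, D (e i) = c i • e i)
    (b : (ℂ × h) →ₗ[ℂ] (ℂ × h) →ₗ[ℂ] (ℂ × h))
    (hb : ∀ (a : ℂ) (y : h) (a' : ℂ) (z : h),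
      b (a, y) (a', z) = ((0 : ℂ), a • D z - a' • D y + ⁅y, z⁆)) :
    (∃ k : ℕ, derivedSeriesOfBil b k = ⊥) ∧ (∀ k : ℕ, lowerCentralOfBil b k ≠ ⊥) :=
  semidirect_solvable_not_nilpotent_general D hD hDss b hb
end

section
/- Let t ∈ ℂ∖{0} and let d₁,…,d_m ∈ ℂ be pairwise distinct. Suppose (p_{r,s})_{1 ≤ s ≤ r ≤ m} is a family of complex numbers with prescribed diagonal values p_{s,s} and coefficients d_{r,s} ∈ ℂ for r > s, satisfying the recurrence p_{r,s} = Σ_{l=s}^{r} ( p_{r,l}·f_r(l,s)·Y(r,s) + p_{l,s}·f_s(r,l)·Y(s,r) ) for all r > s, where Y(i,j) = 1/(t(d_i − d_j)) and f_z(x,y) = t·d_{x,y} if x − y > 1, f_z(x,y) = t(1 + d_{x,y}) if z ≤ y = x−1, and f_z(x,y) = 1 + t·d_{x,y} if z > y = x−1. Then p_{r,s} is uniquely determined by the diagonal values, and p_{r,s} = Σ over all strictly decreasing integer sequences a₁ = r > a₂ > ⋯ > a_k = s (of every length k ≥ 2) of Σ_{i=1}^{k} p_{a_i,a_i} · Π_{j=1}^{k−1}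 f_{a_i}(a_j, a_{j+1}) · Y_k(a_i, a_j), where Y_k(a_i, a_j) = Y(a_i, a_j) if i ≠ j and Y_k(a_i, a_i) = Y(a_i, a_k). -/
noncomputable section

/-- `Y(i,j) = 1/(t(d_i − d_j))`. -/
def Yc (t : ℂ) (d : ℕ → ℂ) (i j : ℕ) : ℂ := 1 / (t * (d i - d j))

/-- `f_z(x,y)` for `x > y`: `t·d_{x,y}` if `x − y > 1`; `t(1 + d_{x,y})` if `z ≤ y = x−1`;
`1 + t·d_{x,y}` if `z > y = x−1` (and `0` if `x ≤ y`). -/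
def fz (t : ℂ) (doff : ℕ → ℕ → ℂ) (z x y : ℕ) : ℂ :=
  if x ≤ y then 0
  else if y + 1 < x then t * doff x y
  else if z ≤ y then t * (1 + doff x y)
  else 1 + t * doff x y

/-- The strictly decreasing sequence `r = a₁ > a₂ > ⋯ > a_k = s` whose intermediate entries are
the elements of `S ⊆ (s, r)`, as a list sorted in decreasing order. -/
def seqList (r s : ℕ) (S : Finset ℕ) : List ℕ :=
  ((insert r (insert s S)).sort (· ≤ ·)).reverse

/-- The contribution `Σ_{i=1}^{k} p_{a_i,a_i} · Π_{j=1}^{k−1} f_{a_i}(a_j, a_{j+1}) · Y_k(a_i, a_j)`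
of a strictly decreasing sequence `a₁ > ⋯ > a_k`, where `Y_k(a_i,a_j) = Y(a_i,a_j)` for `i ≠ j`
and `Y_k(a_i,a_i) = Y(a_i,a_k)`. -/
def seqTerm (t : ℂ) (d : ℕ → ℂ) (doff : ℕ → ℕ → ℂ) (pdiag : ℕ → ℂ) (L : List ℕ) : ℂ :=
  ∑ i ∈ Finset.range L.length,
    pdiag (L.getD i 0) *
      ∏ j ∈ Finset.range (L.length - 1),
        fz t doff (L.getD i 0) (L.getD j 0) (L.getD (j + 1) 0) *
          (if i ≠ j then Yc t d (L.getD i 0) (L.getD j 0)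
            else Yc t d (L.getD i 0) (L.getD (L.length - 1) 0))


/-!
Write the `Y`-factors of the `i`-th summand of the contribution `T` (`seqTerm`) of a chain
`a₀ > ⋯ > a_n` as `∏_{j ≠ i} Y(a_i, a_j)` (`chainTerm`). Removing the last or the first vertex gives

  T(a₀,…,a_n) = T(a₀,…,a_{n-1}) f_{a₀}(a_{n-1},a_n) Y(a₀,a_n) + T(a₁,…,a_n) f_{a_n}(a₀,a₁) Y(a_n,a₀)

(the summands `i = 0` and `i = n` occur on one side only, and for `0 < i < n` the identity is the
partial fraction decomposition `Y(u,r) Y(u,s) = Y(u,r) Y(r,s) + Y(u,s) Y(s,r)`, since `f_z(x, y)`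
depends on `z` only through `z ≤ y`). Summing over all chains from `r` to `s`, grouped by their
second-to-last resp. second vertex `l`, shows that the closed form satisfies the recurrence.
In the recurrence `p_{r,s}` itself only occurs with the factor `f(x, x) = 0`, so a solution is
determined by its diagonal, by induction on `r - s`; this gives uniqueness, and hence the formula.
-/

open Finset

namespace Finset

theorem prod_range_ite_ne_eq {M : Type*} [CommMonoid M] (h : ℕ → M) {i k : ℕ} (hi : i ≤ k) :
    ∏ j ∈ range k, (if i ≠ j then h j else h k) =
      ∏ j ∈ range (k + 1), if j = i then 1 else h j := by
  rw [prod_range_succ]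
  rcases hi.lt_or_eq with hik | rfl
  · have hi : i ∈ range k := mem_range.2 hik
    rw [← mul_prod_erase _ _ hi, ← mul_prod_erase _ _ hi, if_neg (by simp), if_pos rfl,
      if_neg hik.ne', one_mul, mul_comm]
    congr 1
    refine prod_congr rfl fun j hj => ?_
    have hji := (mem_erase.1 hj).1
    rw [if_pos hji.symm, if_neg hji]
  · rw [if_pos rfl, mul_one]
    refine prod_congr rfl fun j hj => ?_
    have hji := (mem_range.1 hj).ne'
    rw [if_pos hji, if_neg hji.symm]

theorem reverse_sort_le {α : Type*} [LinearOrder α] (S : Finset α) :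
    (S.sort (· ≤ ·)).reverse = S.sort (· ≥ ·) :=
  (List.sortedGT_reverse.2 (sortedLT_sort S)).eq_of_mem_iff (sortedGT_sort S) (by simp)

theorem sort_ge_insert_of_lt {α : Type*} [LinearOrder α] {S : Finset α} {l : α}
    (h : ∀ x ∈ S, l < x) : (insert l S).sort (· ≥ ·) = S.sort (· ≥ ·) ++ [l] := by
  rw [← reverse_sort_le, sort_insert _ (fun x hx => (h x hx).le) fun hl => (h l hl).false,
    List.reverse_cons, reverse_sort_le]

theorem sort_ge_insert_of_gt {α : Type*} [LinearOrder α] {S : Finset α} {l : α}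
    (h : ∀ x ∈ S, x < l) : (insert l S).sort (· ≥ ·) = l :: S.sort (· ≥ ·) :=
  sort_insert _ (fun x hx => (h x hx).le) fun hl => (h l hl).false

theorem sum_powerset_Ioo_eq_add_sum_min {M : Type*} [AddCommMonoid M] (F : Finset ℕ → M)
    (a b : ℕ) :
    ∑ S ∈ (Ioo a b).powerset, F S =
      F ∅ + ∑ l ∈ Ioo a b, ∑ S ∈ (Ioo l b).powerset, F (insert l S) := by
  rcases lt_or_ge (a + 1) b with h | h
  · have hIoo : Ioo a b = insert (a + 1) (Ioo (a + 1) b) := by ext x; simp; omega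
    rw [hIoo, sum_powerset_insert (by simp), sum_insert (by simp),
      sum_powerset_Ioo_eq_add_sum_min F (a + 1) b]
    abel
  · have hIoo : Ioo a b = ∅ := by ext x; simp; omega
    simp [hIoo]
termination_by b - a

theorem sum_powerset_Ioo_eq_add_sum_max {M : Type*} [AddCommMonoid M] (F : Finset ℕ → M)
    (a b : ℕ) :
    ∑ S ∈ (Ioo a b).powerset, F S =
      F ∅ + ∑ l ∈ Ioo a b, ∑ S ∈ (Ioo a l).powerset, F (insert l S) := by
  induction b with
  | zero => simp
  | succ b ih =>
    rcases lt_or_ge a b with h | h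
    · have hIoo : Ioo a (b + 1) = insert b (Ioo a b) := by ext x; simp; omega
      rw [hIoo, sum_powerset_insert (by simp), sum_insert (by simp), ih]
      abel
    · have hIoo : Ioo a (b + 1) = ∅ := by ext x; simp; omega
      simp [hIoo]

end Finset

theorem Yc_mul_Yc (t : ℂ) (d : ℕ → ℂ) {u r s : ℕ} (hur : d u ≠ d r) (hus : d u ≠ d s)
    (hrs : d r ≠ d s) :
    Yc t d u r * Yc t d u s = Yc t d u r * Yc t d r s + Yc t d u s * Yc t d s r := by
  rcases eq_or_ne t 0 with rfl | ht
  · simp [Yc]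
  have hur' := sub_ne_zero.2 hur
  have hus' := sub_ne_zero.2 hus
  have hrs' := sub_ne_zero.2 hrs
  have hsr' := sub_ne_zero.2 hrs.symm
  unfold Yc
  field_simp
  ring

theorem fz_of_le (t : ℂ) (doff : ℕ → ℕ → ℂ) {z x y : ℕ} (h : x ≤ y) : fz t doff z x y = 0 := by
  simp [fz, h]

theorem fz_congr_of_le_iff (t : ℂ) (doff : ℕ → ℕ → ℂ) {z₁ z₂ x y : ℕ} (h : z₁ ≤ y ↔ z₂ ≤ y) :
    fz t doff z₁ x y = fz t doff z₂ x y := by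
  unfold fz
  split_ifs <;> tauto

theorem seqList_sortedGT (r s : ℕ) (S : Finset ℕ) : (seqList r s S).SortedGT := by
  rw [seqList, reverse_sort_le]
  exact sortedGT_sort _

theorem mem_seqList {r s x : ℕ} {S : Finset ℕ} : x ∈ seqList r s S ↔ x ∈ insert r (insert s S) := by
  simp [seqList]

theorem seqList_eq {r s : ℕ} {S : Finset ℕ} (hsr : s < r) (hS : S ⊆ Ioo s r) :
    seqList r s S = r :: (S.sort (· ≥ ·) ++ [s]) := by
  have hS' : ∀ x ∈ S, s < x ∧ x < r := fun x hx => mem_Ioo.1 (hS hx)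
  rw [seqList, reverse_sort_le, sort_ge_insert_of_gt, sort_ge_insert_of_lt fun x hx => (hS' x hx).1]
  simp only [mem_insert]
  rintro x (rfl | hx)
  · exact hsr
  · exact (hS' x hx).2

section ClosedForm

variable (t : ℂ) (d : ℕ → ℂ) (doff : ℕ → ℕ → ℂ) (pdiag : ℕ → ℂ)

def chainSummand (g : ℕ → ℕ) (k i : ℕ) : ℂ :=
  pdiag (g i) * (∏ j ∈ range (k - 1), fz t doff (g i) (g j) (g (j + 1))) *
    ∏ j ∈ range k, if j = i then 1 else Yc t d (g i) (g j)

def chainTerm (g : ℕ → ℕ) (k : ℕ) : ℂ :=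
  ∑ i ∈ range k, chainSummand t d doff pdiag g k i

theorem seqTerm_eq_chainTerm (L : List ℕ) :
    seqTerm t d doff pdiag L = chainTerm t d doff pdiag (L.getD · 0) L.length := by
  refine sum_congr rfl fun i hi => ?_
  obtain ⟨k, hk⟩ : ∃ k, L.length = k + 1 := ⟨L.length - 1, by have := mem_range.1 hi; omega⟩
  rw [chainSummand, prod_mul_distrib, mul_assoc, hk, Nat.add_sub_cancel,
    prod_range_ite_ne_eq _ (by have := mem_range.1 hi; omega)]

theorem chainTerm_congr {g g' : ℕ → ℕ} {k : ℕ} (h : ∀ i < k, g i = g' i) :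
    chainTerm t d doff pdiag g k = chainTerm t d doff pdiag g' k := by
  refine sum_congr rfl fun i hi => ?_
  have hi := mem_range.1 hi
  unfold chainSummand
  rw [h i hi]
  congr 1
  · congr 1
    exact prod_congr rfl fun j hj => by
      have := mem_range.1 hj
      rw [h j (by omega), h (j + 1) (by omega)]
  · exact prod_congr rfl fun j hj => by rw [h j (mem_range.1 hj)]

theorem chainSummand_succ (g : ℕ → ℕ) {n : ℕ} (hn : 1 ≤ n) (i : ℕ) :
    chainSummand t d doff pdiag g (n + 1) i =
      chainSummand t d doff pdiag g n i *
        (fz t doff (g i) (g (n - 1)) (g n) * if n = i then 1 else Yc t d (g i) (g n)) := by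
  obtain ⟨N, rfl⟩ : ∃ N, n = N + 1 := ⟨n - 1, by omega⟩
  simp only [chainSummand, Nat.add_sub_cancel, prod_range_succ _ N, prod_range_succ _ (N + 1)]
  ring

theorem chainSummand_succ_succ (g : ℕ → ℕ) {n : ℕ} (hn : 1 ≤ n) (i : ℕ) :
    chainSummand t d doff pdiag g (n + 1) (i + 1) =
      chainSummand t d doff pdiag (fun j => g (j + 1)) n i *
        (fz t doff (g (i + 1)) (g 0) (g 1) * Yc t d (g (i + 1)) (g 0)) := by
  obtain ⟨N, rfl⟩ : ∃ N, n = N + 1 := ⟨n - 1, by omega⟩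
  simp only [chainSummand, Nat.add_sub_cancel, prod_range_succ' _ N, prod_range_succ' _ (N + 1),
    add_left_inj, if_neg (Nat.succ_ne_zero i).symm]
  ring

theorem chainSummand_succ_of_lt (g : ℕ → ℕ) {n i : ℕ} (hin : i + 1 < n)
    (hg : StrictAntiOn g (Set.Iic n)) (hd : Set.InjOn d (g '' Set.Iic n)) :
    chainSummand t d doff pdiag g (n + 1) (i + 1) =
      chainSummand t d doff pdiag g n (i + 1) *
          (fz t doff (g 0) (g (n - 1)) (g n) * Yc t d (g 0) (g n)) +
        chainSummand t d doff pdiag (fun j => g (j + 1)) n i *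
          (fz t doff (g n) (g 0) (g 1) * Yc t d (g n) (g 0)) := by
  obtain ⟨N, rfl⟩ : ∃ N, n = N + 2 := ⟨n - 2, by omega⟩
  have hlt : ∀ {j k}, j < k → k ≤ N + 2 → g k < g j := fun hjk hk =>
    hg (Set.mem_Iic.2 (by omega)) (Set.mem_Iic.2 hk) hjk
  have hne : ∀ {j k}, j < k → k ≤ N + 2 → d (g j) ≠ d (g k) := fun hjk hk h =>
    (hlt hjk hk).ne' (hd ⟨_, Set.mem_Iic.2 (by omega), rfl⟩ ⟨_, Set.mem_Iic.2 hk, rfl⟩ h)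
  have hdrop_last := chainSummand_succ t d doff pdiag g (n := N + 2) (by omega) (i + 1)
  have hsuffix_drop_last :=
    chainSummand_succ t d doff pdiag (fun j => g (j + 1)) (n := N + 1) (by omega) i
  have hprefix_drop_first :=
    chainSummand_succ_succ t d doff pdiag g (n := N + 1) (by omega) i
  simp only [Nat.add_sub_cancel, show N + 2 - 1 = N + 1 by omega,
    if_neg (show N + 2 ≠ i + 1 by omega), if_neg (show N + 1 ≠ i by omega)]
    at hdrop_last hsuffix_drop_last
  have hfz_last : fz t doff (g 0) (g (N + 1)) (g (N + 2)) =
      fz t doff (g (i + 1)) (g (N + 1)) (g (N + 2)) :=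
    fz_congr_of_le_iff t doff (iff_of_false (hlt (by omega) le_rfl).not_ge
      (hlt (by omega) le_rfl).not_ge)
  have hfz_first : fz t doff (g (N + 2)) (g 0) (g 1) = fz t doff (g (i + 1)) (g 0) (g 1) :=
    fz_congr_of_le_iff t doff (iff_of_true (hlt (by omega) le_rfl).le
      (hg.antitoneOn (Set.mem_Iic.2 (by omega)) (Set.mem_Iic.2 (by omega)) (by omega)))
  have hpartial := Yc_mul_Yc t d (u := g (i + 1)) (r := g 0) (s := g (N + 2))
    (hne (by omega) (by omega)).symm (hne (by omega) le_rfl) (hne (by omega) le_rfl)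
  rw [show N + 2 - 1 = N + 1 by omega, hdrop_last, hsuffix_drop_last, hprefix_drop_first,
    hfz_last, hfz_first]
  linear_combination (chainSummand t d doff pdiag (fun j => g (j + 1)) (N + 1) i *
    fz t doff (g (i + 1)) (g 0) (g 1) * fz t doff (g (i + 1)) (g (N + 1)) (g (N + 2))) * hpartial

theorem chainTerm_succ (g : ℕ → ℕ) {n : ℕ} (hn : 1 ≤ n) (hg : StrictAntiOn g (Set.Iic n))
    (hd : Set.InjOn d (g '' Set.Iic n)) :
    chainTerm t d doff pdiag g (n + 1) =
      chainTerm t d doff pdiag g n * (fz t doff (g 0) (g (n - 1)) (g n) * Yc t d (g 0) (g n)) +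
        chainTerm t d doff pdiag (fun i => g (i + 1)) n *
          (fz t doff (g n) (g 0) (g 1) * Yc t d (g n) (g 0)) := by
  obtain ⟨N, rfl⟩ : ∃ N, n = N + 1 := ⟨n - 1, by omega⟩
  have hinterior : ∀ i ∈ range N, chainSummand t d doff pdiag g (N + 1 + 1) (i + 1) = _ :=
    fun i hi => chainSummand_succ_of_lt t d doff pdiag g (by have := mem_range.1 hi; omega) hg hd
  simp only [chainTerm, sum_mul]
  rw [sum_range_succ _ (N + 1), sum_range_succ', sum_congr rfl hinterior, sum_add_distrib,
    chainSummand_succ t d doff pdiag g hn, chainSummand_succ_succ t d doff pdiag g hn,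
    sum_range_succ' _ N, sum_range_succ _ N]
  simp only [Nat.add_sub_cancel, if_neg (Nat.succ_ne_zero N)]
  ring

theorem seqTerm_cons_append {a b : ℕ} {M : List ℕ} (hL : (a :: (M ++ [b])).SortedGT)
    (hd : Set.InjOn d {x | x ∈ a :: (M ++ [b])}) :
    seqTerm t d doff pdiag (a :: (M ++ [b])) =
      seqTerm t d doff pdiag (a :: M) * (fz t doff a (M.getLastD a) b * Yc t d a b) +
        seqTerm t d doff pdiag (M ++ [b]) * (fz t doff b a (M.headD b) * Yc t d b a) := by
  set L := a :: (M ++ [b])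
  set g : ℕ → ℕ := (L.getD · 0)
  have hlen : L.length = M.length + 1 + 1 := by simp [L]
  have hgL : ∀ {i} (hi : i ≤ M.length + 1), g i = L[i]'(by omega) := fun _ =>
    List.getD_eq_getElem _ _ _
  have hg : StrictAntiOn g (Set.Iic (M.length + 1)) := fun i hi j hj hij => by
    rw [hgL hi, hgL hj]
    exact hL (show (⟨i, by simp only [Set.mem_Iic] at hi; omega⟩ : Fin L.length) <
      ⟨j, by simp only [Set.mem_Iic] at hj; omega⟩ from hij)
  have hgd : Set.InjOn d (g '' Set.Iic (M.length + 1)) := hd.mono <| by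
    rintro _ ⟨i, hi, rfl⟩
    rw [hgL hi]
    exact List.getElem_mem _
  have hprefix : seqTerm t d doff pdiag (a :: M) = chainTerm t d doff pdiag g (M.length + 1) := by
    rw [seqTerm_eq_chainTerm]
    exact chainTerm_congr t d doff pdiag fun i hi =>
      (List.getD_append (a :: M) [b] 0 i hi).symm
  have hsuffix : seqTerm t d doff pdiag (M ++ [b]) =
      chainTerm t d doff pdiag (fun i => g (i + 1)) (M.length + 1) := by
    rw [seqTerm_eq_chainTerm, List.length_append, List.length_singleton]
    rfl
  have hsecond_last : g M.length = M.getLastD a := by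
    rw [← List.getLast_eq_getLastD (List.cons_ne_nil a M), List.getLast_eq_getElem]
    simp only [g, L, ← List.cons_append]
    rw [List.getD_append _ _ _ _ (by simp), List.getD_eq_getElem _ _ (by simp)]
    simp
  have hlast : g (M.length + 1) = b := by simp [g, L]
  have hsecond : g 1 = M.headD b := by cases M <;> rfl
  rw [seqTerm_eq_chainTerm, hlen, chainTerm_succ t d doff pdiag g (by omega) hg hgd, hprefix,
    hsuffix, Nat.add_sub_cancel, hsecond_last, hlast, hsecond]
  rfl

def recurrenceRhs (q : ℕ → ℕ → ℂ) (r s : ℕ) : ℂ :=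
  ∑ l ∈ Icc s r, (q r l * fz t doff r l s * Yc t d r s + q l s * fz t doff s r l * Yc t d s r)

theorem recurrenceRhs_eq (q : ℕ → ℕ → ℂ) {r s : ℕ} (hsr : s < r) :
    recurrenceRhs t d doff q r s =
      q r r * fz t doff r r s * Yc t d r s + q s s * fz t doff s r s * Yc t d s r +
        ∑ l ∈ Ioo s r,
          (q r l * fz t doff r l s * Yc t d r s + q l s * fz t doff s r l * Yc t d s r) := by
  rw [recurrenceRhs, ← Ioc_insert_left hsr.le, sum_insert (by simp), ← Ioo_insert_right hsr,
    sum_insert (by simp), fz_of_le t doff (le_refl s), fz_of_le t doff (le_refl r)]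
  ring

theorem eq_of_recurrence {m : ℕ} {p q : ℕ → ℕ → ℂ}
    (hdiag : ∀ s, 1 ≤ s → s ≤ m → p s s = q s s)
    (hp : ∀ r s, 1 ≤ s → s < r → r ≤ m → p r s = recurrenceRhs t d doff p r s)
    (hq : ∀ r s, 1 ≤ s → s < r → r ≤ m → q r s = recurrenceRhs t d doff q r s)
    (r s : ℕ) (hs : 1 ≤ s) (hsr : s ≤ r) (hr : r ≤ m) : p r s = q r s := by
  rcases hsr.eq_or_lt with rfl | hlt
  · exact hdiag s hs hr
  rw [hp r s hs hlt hr, hq r s hs hlt hr, recurrenceRhs_eq _ _ _ _ hlt,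
    recurrenceRhs_eq _ _ _ _ hlt, hdiag r (by omega) hr, hdiag s hs (by omega)]
  congr 1
  refine sum_congr rfl fun l hl => ?_
  obtain ⟨hsl, hlr⟩ := mem_Ioo.1 hl
  rw [eq_of_recurrence hdiag hp hq r l (by omega) hlr.le hr,
    eq_of_recurrence hdiag hp hq l s hs hsl.le (by omega)]
termination_by r - s

def closedForm (r s : ℕ) : ℂ :=
  ∑ S ∈ (Ioo s r).powerset, seqTerm t d doff pdiag (seqList r s S)

theorem closedForm_self (s : ℕ) : closedForm t d doff pdiag s s = pdiag s := by
  simp [closedForm, seqList, seqTerm]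

theorem seqTerm_seqList {r s : ℕ} {S : Finset ℕ} (hsr : s < r) (hS : S ⊆ Ioo s r)
    (hd : Set.InjOn d (Set.Icc s r)) :
    seqTerm t d doff pdiag (seqList r s S) =
      seqTerm t d doff pdiag (r :: S.sort (· ≥ ·)) *
          (fz t doff r ((S.sort (· ≥ ·)).getLastD r) s * Yc t d r s) +
        seqTerm t d doff pdiag (S.sort (· ≥ ·) ++ [s]) *
          (fz t doff s r ((S.sort (· ≥ ·)).headD s) * Yc t d s r) := by
  have hsorted := seqList_sortedGT r s S
  have hd' : Set.InjOn d {x | x ∈ seqList r s S} := hd.mono fun x hx => by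
    rcases mem_insert.1 (mem_seqList.1 hx) with rfl | hx
    · exact ⟨hsr.le, le_rfl⟩
    rcases mem_insert.1 hx with rfl | hx
    · exact ⟨le_rfl, hsr.le⟩
    exact Set.Ioo_subset_Icc_self (coe_Ioo s r ▸ hS hx)
  rw [seqList_eq hsr hS] at hsorted hd' ⊢
  exact seqTerm_cons_append t d doff pdiag hsorted hd'

theorem closedForm_recurrence {r s : ℕ} (hsr : s < r) (hd : Set.InjOn d (Set.Icc s r)) :
    closedForm t d doff pdiag r s = recurrenceRhs t d doff (closedForm t d doff pdiag) r s := by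
  have hprefix : ∀ l ∈ Ioo s r, ∑ S ∈ (Ioo l r).powerset,
      seqTerm t d doff pdiag (r :: (insert l S).sort (· ≥ ·)) *
        (fz t doff r (((insert l S).sort (· ≥ ·)).getLastD r) s * Yc t d r s) =
      closedForm t d doff pdiag r l * (fz t doff r l s * Yc t d r s) := by
    intro l hl
    rw [closedForm, sum_mul]
    refine sum_congr rfl fun S hS => ?_
    have hS := mem_powerset.1 hS
    rw [sort_ge_insert_of_lt fun x hx => (mem_Ioo.1 (hS hx)).1, seqList_eq (mem_Ioo.1 hl).2 hS]
    simp
  have hsuffix : ∀ l ∈ Ioo s r, ∑ S ∈ (Ioo s l).powerset,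
      seqTerm t d doff pdiag ((insert l S).sort (· ≥ ·) ++ [s]) *
        (fz t doff s r (((insert l S).sort (· ≥ ·)).headD s) * Yc t d s r) =
      closedForm t d doff pdiag l s * (fz t doff s r l * Yc t d s r) := by
    intro l hl
    obtain ⟨hsl, -⟩ := mem_Ioo.1 hl
    rw [closedForm, sum_mul]
    refine sum_congr rfl fun S hS => ?_
    have hS := mem_powerset.1 hS
    rw [sort_ge_insert_of_gt fun x hx => (mem_Ioo.1 (hS hx)).2, seqList_eq hsl hS]
    simp
  rw [closedForm,
    sum_congr rfl fun S hS => seqTerm_seqList t d doff pdiag hsr (mem_powerset.1 hS) hd,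
    sum_add_distrib, sum_powerset_Ioo_eq_add_sum_min,
    sum_powerset_Ioo_eq_add_sum_max, sum_congr rfl hprefix, sum_congr rfl hsuffix,
    recurrenceRhs_eq _ _ _ _ hsr, closedForm_self, closedForm_self, sum_add_distrib]
  have hsingleton : ∀ x, seqTerm t d doff pdiag [x] = pdiag x := by simp [seqTerm]
  simp only [sort_empty, List.getLastD_nil, List.headD_nil, List.nil_append, hsingleton, mul_assoc]
  ring

end ClosedForm

theorem recurrence_closed_form_general (m : ℕ) (t : ℂ) (d : ℕ → ℂ)
    (hd : ∀ i j, 1 ≤ i → i ≤ m → 1 ≤ j → j ≤ m → i ≠ j → d i ≠ d j)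
    (doff : ℕ → ℕ → ℂ) (pdiag : ℕ → ℂ) (p : ℕ → ℕ → ℂ)
    (hpdiag : ∀ s, 1 ≤ s → s ≤ m → p s s = pdiag s)
    (hrec : ∀ r s, 1 ≤ s → s < r → r ≤ m →
      p r s = ∑ l ∈ Finset.Icc s r,
        (p r l * fz t doff r l s * Yc t d r s + p l s * fz t doff s r l * Yc t d s r)) :
    (∀ q : ℕ → ℕ → ℂ,
      (∀ s, 1 ≤ s → s ≤ m → q s s = pdiag s) →
      (∀ r s, 1 ≤ s → s < r → r ≤ m →
        q r s = ∑ l ∈ Finset.Icc s r,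
          (q r l * fz t doff r l s * Yc t d r s + q l s * fz t doff s r l * Yc t d s r)) →
      ∀ r s, 1 ≤ s → s ≤ r → r ≤ m → q r s = p r s) ∧
    (∀ r s, 1 ≤ s → s < r → r ≤ m →
      p r s = ∑ S ∈ (Finset.Ioo s r).powerset, seqTerm t d doff pdiag (seqList r s S)) := by
  have hinj : Set.InjOn d (Set.Icc 1 m) := fun i hi j hj hij =>
    by_contra fun hne => hd i j hi.1 hi.2 hj.1 hj.2 hne hij
  have hunique : ∀ q : ℕ → ℕ → ℂ, (∀ s, 1 ≤ s → s ≤ m → q s s = pdiag s) →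
      (∀ r s, 1 ≤ s → s < r → r ≤ m → q r s = recurrenceRhs t d doff q r s) →
      ∀ r s, 1 ≤ s → s ≤ r → r ≤ m → q r s = p r s := fun q hq hqrec =>
    eq_of_recurrence t d doff (fun s hs hsm => (hq s hs hsm).trans (hpdiag s hs hsm).symm)
      hqrec hrec
  refine ⟨hunique, fun r s hs hsr hr => ?_⟩
  refine (hunique (closedForm t d doff pdiag) (fun s _ _ => closedForm_self t d doff pdiag s)
    (fun r s hs hsr hr => ?_) r s hs hsr.le hr).symm
  exact closedForm_recurrence t d doff pdiag hsr (hinj.mono (Set.Icc_subset_Icc hs hr))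

/-- the recurrence
`p_{r,s} = Σ_{l=s}^{r} (p_{r,l}·f_r(l,s)·Y(r,s) + p_{l,s}·f_s(r,l)·Y(s,r))` with prescribed
diagonal values `p_{s,s}` has a unique solution, given by the closed formula summing `seqTerm`
over all strictly decreasing integer sequences from `r` to `s`. -/
theorem recurrence_closed_form (m : ℕ) (t : ℂ) (ht : t ≠ 0) (d : ℕ → ℂ)
    (hd : ∀ i j, 1 ≤ i → i ≤ m → 1 ≤ j → j ≤ m → i ≠ j → d i ≠ d j)
    (doff : ℕ → ℕ → ℂ) (pdiag : ℕ → ℂ) (p : ℕ → ℕ → ℂ)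
    (hpdiag : ∀ s, 1 ≤ s → s ≤ m → p s s = pdiag s)
    (hrec : ∀ r s, 1 ≤ s → s < r → r ≤ m →
      p r s = ∑ l ∈ Finset.Icc s r,
        (p r l * fz t doff r l s * Yc t d r s + p l s * fz t doff s r l * Yc t d s r)) :
    (∀ q : ℕ → ℕ → ℂ,
      (∀ s, 1 ≤ s → s ≤ m → q s s = pdiag s) →
      (∀ r s, 1 ≤ s → s < r → r ≤ m →
        q r s = ∑ l ∈ Finset.Icc s r,
          (q r l * fz t doff r l s * Yc t d r s + q l s * fz t doff s r l * Yc t d s r)) →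
      ∀ r s, 1 ≤ s → s ≤ r → r ≤ m → q r s = p r s) ∧
    (∀ r s, 1 ≤ s → s < r → r ≤ m →
      p r s = ∑ S ∈ (Finset.Ioo s r).powerset, seqTerm t d doff pdiag (seqList r s S)) :=
  recurrence_closed_form_general m t d hd doff pdiag p hpdiag hrec

end
end
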